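/- Let (ψ,φ) be a reproducing pair of weakly measurable functions X → H, and let θ : X → H be weakly measurable. Then (θ,φ) is a reproducing pair if and only if θ = Aψ + θ₀, i.e. θ(x) = Aψ(x) + θ₀(x) for a.e. x, where A ∈ GL(H) (a bounded operator on H with bounded everywhere-defined inverse) and θ₀ : X → H is weakly measurable with [⟨f,θ₀(·)⟩]_φ = [0]_φ for every f ∈ H (equivalently, Ĉ_{θ₀,φ}f = 0 for all f ∈ H). -/

import Mathlib

open MeasureTheory Filter Topology
open scoped Classical ENNReal NNReal

noncomputable section

variable {H : Type*} [NormedAddCommGroup H] [InnerProductSpace ℂ H] [CompleteSpace H]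
  [TopologicalSpace.SeparableSpace H]
variable {X : Type*} [TopologicalSpace X] [LocallyCompactSpace X] [MeasurableSpace X]
  [BorelSpace X]

/-- Notation for the Mathlib inner product (conjugate-linear in the first slot);
the paper's inner product `⟨f, g⟩` (linear in the first slot) is `⟪g, f⟫`. -/
local notation "⟪" x ", " y "⟫" => @inner ℂ _ _ x y

/-- `φ : X → H` is weakly measurable: `x ↦ ⟨f, φ x⟩` is measurable for every `f ∈ H`. -/
def WeaklyMeasurable (φ : X → H) : Prop :=
  ∀ f : H, Measurable fun x => ⟪φ x, f⟫

/-- `ξ ∈ 𝒱_φ(X,μ)`: `ξ` is measurable, the integral `∫ ξ(x) ⟨φ(x), g⟩ dμ(x)` exists for all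
`g ∈ H`, and it defines a bounded conjugate-linear functional of `g`. -/
def MemV (μ : Measure X) (φ : X → H) (ξ : X → ℂ) : Prop :=
  Measurable ξ ∧ (∀ g : H, Integrable (fun x => ξ x * ⟪g, φ x⟫) μ) ∧
    ∃ c : ℝ, ∀ g : H, ‖∫ x, ξ x * ⟪g, φ x⟫ ∂μ‖ ≤ c * ‖g‖

/-- The map `T_φ : 𝒱_φ(X,μ) → H`, determined weakly by
`⟨T_φ ξ, g⟩ = ∫ ξ(x) ⟨φ(x), g⟩ dμ(x)` for all `g ∈ H` (junk value `0` off `𝒱_φ`). -/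
def Tmap (μ : Measure X) (φ : X → H) (ξ : X → ℂ) : H :=
  if h : MemV μ φ ξ then
    have key : ∀ g : H, Integrable (fun x => (starRingEnd ℂ) (ξ x) * ⟪φ x, g⟫) μ := by
      intro g
      have h2 : Integrable (fun x => (RCLike.conjLIE : ℂ ≃ₗᵢ[ℝ] ℂ) (ξ x * ⟪g, φ x⟫)) μ :=
        ((RCLike.conjLIE : ℂ ≃ₗᵢ[ℝ] ℂ).integrable_comp_iff).2 (h.2.1 g)
      simpa [RCLike.conjLIE_apply, map_mul] using h2
    (InnerProductSpace.toDual ℂ H).symm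
      (LinearMap.mkContinuousOfExistsBound
        { toFun := fun g => ∫ x, (starRingEnd ℂ) (ξ x) * ⟪φ x, g⟫ ∂μ
          map_add' := fun g g' => by
            simp only [inner_add_right, mul_add]
            exact integral_add (key g) (key g')
          map_smul' := fun c g => by
            simp only [inner_smul_right, RingHom.id_apply]
            calc ∫ x, (starRingEnd ℂ) (ξ x) * (c * ⟪φ x, g⟫) ∂μ
                = ∫ x, c * ((starRingEnd ℂ) (ξ x) * ⟪φ x, g⟫) ∂μ := by
                  simp only [mul_left_comm]
              _ = c * ∫ x, (starRingEnd ℂ) (ξ x) * ⟪φ x, g⟫ ∂μ := integral_const_mul _ _ }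
        (by
          obtain ⟨c, hc⟩ := h.2.2
          refine ⟨c, fun g => ?_⟩
          have he : ∫ x, (starRingEnd ℂ) (ξ x) * ⟪φ x, g⟫ ∂μ
              = (starRingEnd ℂ) (∫ x, ξ x * ⟪g, φ x⟫ ∂μ) := by
            rw [← integral_conj]
            congr 1; funext x
            simp [map_mul]
          simp only [LinearMap.coe_mk, AddHom.coe_mk]
          rw [he, RCLike.norm_conj]
          exact hc g))
  else 0

/-- The norm `‖[ξ]_φ‖_φ = sup_{‖g‖ ≤ 1} |∫ ξ(x) ⟨φ(x), g⟩ dμ(x)|` (computed on a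
representative; it only depends on the class `[ξ]_φ = ξ + Ker T_φ`). -/
def Vnorm (μ : Measure X) (φ : X → H) (ξ : X → ℂ) : ℝ :=
  ⨆ g : {g : H // ‖g‖ ≤ 1}, ‖∫ x, ξ x * ⟪(g : H), φ x⟫ ∂μ‖

/-- The range of `T̂_φ : V_φ(X,μ) → H` (equivalently, of `T_φ` on `𝒱_φ(X,μ)`). -/
def Tran (μ : Measure X) (φ : X → H) : Set H := Tmap μ φ '' {ξ | MemV μ φ ξ}

/-- The analysis coefficient map: `(C_ψ f)(x) = ⟨f, ψ(x)⟩`. -/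
def Cpsi (ψ : X → H) (f : H) : X → ℂ := fun x => ⟪ψ x, f⟫

/-- `φ` is `μ`-total: `Ker C_φ = {0}`, i.e. if `∫ ξ(x) ⟨φ(x), f⟩ dμ(x) = 0` for every
`ξ ∈ 𝒱_φ(X,μ)`, then `f = 0`. -/
def MuTotal (μ : Measure X) (φ : X → H) : Prop :=
  ∀ f : H, (∀ ξ, MemV μ φ ξ → ∫ x, ξ x * ⟪f, φ x⟫ ∂μ = 0) → f = 0

/-- `S : H ≃L[ℂ] H` represents the sesquilinear form `Ω_{ψ,φ}`:
`⟨S f, g⟩ = ∫ ⟨f, ψ(x)⟩ ⟨φ(x), g⟩ dμ(x)` for all `f, g ∈ H`. -/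
def IsAnalysisOp (μ : Measure X) (ψ φ : X → H) (S : H ≃L[ℂ] H) : Prop :=
  ∀ f g : H, ⟪g, S f⟫ = ∫ x, ⟪ψ x, f⟫ * ⟪g, φ x⟫ ∂μ

/-- `(ψ, φ)` is a reproducing pair: both weakly measurable, the form
`Ω_{ψ,φ}(f,g) = ∫ ⟨f,ψ(x)⟩⟨φ(x),g⟩ dμ(x)` is well defined (integrable) and bounded, and the
associated bounded operator `S_{ψ,φ}` has a bounded everywhere-defined inverse. -/
def IsReproducingPair (μ : Measure X) (ψ φ : X → H) : Prop :=
  WeaklyMeasurable ψ ∧ WeaklyMeasurable φ ∧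
    (∀ f g : H, Integrable (fun x => ⟪ψ x, f⟫ * ⟪g, φ x⟫) μ) ∧
    ∃ S : H ≃L[ℂ] H, IsAnalysisOp μ ψ φ S

/-- Completeness of `V_φ(X,μ)` in the norm `‖·‖_φ`, phrased via representatives:
every `‖·‖_φ`-Cauchy sequence of elements of `𝒱_φ(X,μ)` converges in `‖·‖_φ`
to an element of `𝒱_φ(X,μ)`. -/
def VComplete (μ : Measure X) (φ : X → H) : Prop :=
  ∀ ξ : ℕ → X → ℂ, (∀ n, MemV μ φ (ξ n)) →
    (∀ ε : ℝ, 0 < ε → ∃ N, ∀ m ≥ N, ∀ n ≥ N, Vnorm μ φ (ξ m - ξ n) < ε) →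
    ∃ η, MemV μ φ η ∧ Tendsto (fun n => Vnorm μ φ (ξ n - η)) atTop (𝓝 0)

/-- `F` is (induced by) a bounded linear functional on `V_φ(X,μ)`: it is linear on `𝒱_φ(X,μ)`,
constant on the classes of `V_φ(X,μ) = 𝒱_φ(X,μ)/Ker T_φ`, and bounded for `‖·‖_φ`. -/
def IsBddLinearFunctional (μ : Measure X) (φ : X → H) (F : (X → ℂ) → ℂ) : Prop :=
  (∀ ξ η, MemV μ φ ξ → MemV μ φ η → F (ξ + η) = F ξ + F η) ∧
  (∀ (c : ℂ) ξ, MemV μ φ ξ → F (c • ξ) = c * F ξ) ∧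
  (∀ ξ η, MemV μ φ ξ → MemV μ φ η → Tmap μ φ (ξ - η) = 0 → F ξ = F η) ∧
  ∃ c : ℝ, ∀ ξ, MemV μ φ ξ → ‖F ξ‖ ≤ c * Vnorm μ φ ξ

/-- The dual norm `‖F‖_{φ*} = sup_{‖[ξ]_φ‖_φ ≤ 1} |F([ξ]_φ)|`. -/
def DualNorm (μ : Measure X) (φ : X → H) (F : (X → ℂ) → ℂ) : ℝ :=
  ⨆ ξ : {ξ : X → ℂ // MemV μ φ ξ ∧ Vnorm μ φ ξ ≤ 1}, ‖F ξ.1‖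

/-- `V_φ(X,μ)` and `V_ψ(X,μ)` are conjugate dual to each other with respect to the pairing
`⟨⟨ξ, η⟩⟩ = ∫ ξ(x) conj(η(x)) dμ(x)`: the pairing is well defined, each class `[η]_ψ` gives a
bounded linear functional on `V_φ(X,μ)`, and `[η]_ψ ↦ ⟨⟨·, η⟩⟩` is a bijection from `V_ψ(X,μ)`
onto the dual of `V_φ(X,μ)`. -/
def ConjDual (μ : Measure X) (φ ψ : X → H) : Prop :=
  (∀ ξ η, MemV μ φ ξ → MemV μ ψ η →
      Integrable (fun x => ξ x * (starRingEnd ℂ) (η x)) μ) ∧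
  (∀ η, MemV μ ψ η →
      IsBddLinearFunctional μ φ (fun ξ => ∫ x, ξ x * (starRingEnd ℂ) (η x) ∂μ)) ∧
  (∀ η η', MemV μ ψ η → MemV μ ψ η' →
      (∀ ξ, MemV μ φ ξ →
        ∫ x, ξ x * (starRingEnd ℂ) (η x) ∂μ = ∫ x, ξ x * (starRingEnd ℂ) (η' x) ∂μ) →
      Tmap μ ψ (η - η') = 0) ∧
  (∀ F, IsBddLinearFunctional μ φ F →
      ∃ η, MemV μ ψ η ∧ ∀ ξ, MemV μ φ ξ → F ξ = ∫ x, ξ x * (starRingEnd ℂ) (η x) ∂μ)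

/-! The operators `S_{θ,φ}` and `S_{ψ,φ}` are invertible, so `B := S_{ψ,φ}⁻¹ S_{θ,φ} ∈ GL(H)`
and `A := B*` satisfies `⟨f, θ(x) - Aψ(x)⟩ = ⟨f, θ(x)⟩ - ⟨Bf, ψ(x)⟩`. Integrating against
`⟨φ(x), g⟩` gives `⟨S_{θ,φ} f, g⟩ - ⟨S_{ψ,φ} B f, g⟩ = 0`, i.e. `θ₀ := θ - Aψ` has coefficients
in `Ker T_φ`. Conversely, if `θ = Aψ + θ₀` then `Ω_{θ,φ}(f,g) = Ω_{ψ,φ}(A*f, g)`, so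
`S_{θ,φ} = S_{ψ,φ} A*` is invertible. -/

section Adjoint

variable {𝕜 E : Type*} [RCLike 𝕜] [NormedAddCommGroup E] [InnerProductSpace 𝕜 E]
  [CompleteSpace E]

def ContinuousLinearEquiv.adjoint (B : E ≃L[𝕜] E) : E ≃L[𝕜] E :=
  ContinuousLinearEquiv.unitsEquiv 𝕜 E (star ((ContinuousLinearEquiv.unitsEquiv 𝕜 E).symm B))

theorem ContinuousLinearEquiv.adjoint_inner_left (B : E ≃L[𝕜] E) (x y : E) :
    inner 𝕜 (B.adjoint y) x = inner 𝕜 y (B x) :=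
  ContinuousLinearMap.adjoint_inner_left (B : E →L[𝕜] E) x y

theorem ContinuousLinearEquiv.adjoint_inner_right (B : E ≃L[𝕜] E) (x y : E) :
    inner 𝕜 x (B.adjoint y) = inner 𝕜 (B x) y :=
  ContinuousLinearMap.adjoint_inner_right (B : E →L[𝕜] E) x y

end Adjoint

section ReproducingPair

variable {E Y : Type*} [NormedAddCommGroup E] [InnerProductSpace ℂ E] [MeasurableSpace Y]

theorem WeaklyMeasurable.sub {θ ψ : Y → E} (hθ : WeaklyMeasurable θ) (hψ : WeaklyMeasurable ψ) :
    WeaklyMeasurable fun x => θ x - ψ x := fun f => by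
  simp only [inner_sub_left]
  exact (hθ f).sub (hψ f)

variable [CompleteSpace E]

theorem WeaklyMeasurable.map {ψ : Y → E} (hψ : WeaklyMeasurable ψ) (T : E →L[ℂ] E) :
    WeaklyMeasurable fun x => T (ψ x) := fun f => by
  simpa only [ContinuousLinearMap.adjoint_inner_right] using hψ (ContinuousLinearMap.adjoint T f)

theorem inner_Tmap {μ : Measure Y} {φ : Y → E} {ξ : Y → ℂ} (hξ : MemV μ φ ξ) (g : E) :
    ⟪Tmap μ φ ξ, g⟫ = starRingEnd ℂ (∫ x, ξ x * ⟪g, φ x⟫ ∂μ) := by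
  rw [Tmap, dif_pos hξ, InnerProductSpace.toDual_symm_apply, ← integral_conj]
  refine integral_congr_ae (Eventually.of_forall fun x => ?_)
  simp [map_mul]

theorem memV_and_Tmap_eq_zero_iff {μ : Measure Y} {φ : Y → E} {ξ : Y → ℂ} :
    MemV μ φ ξ ∧ Tmap μ φ ξ = 0 ↔ Measurable ξ ∧
      ∀ g : E, Integrable (fun x => ξ x * ⟪g, φ x⟫) μ ∧ ∫ x, ξ x * ⟪g, φ x⟫ ∂μ = 0 := by
  constructor
  · rintro ⟨hξ, hT⟩
    refine ⟨hξ.1, fun g => ⟨hξ.2.1 g, ?_⟩⟩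
    simpa [hT] using (inner_Tmap hξ g).symm
  · rintro ⟨hmeas, hzero⟩
    have hξ : MemV μ φ ξ := ⟨hmeas, fun g => (hzero g).1, 0, fun g => by simp [(hzero g).2]⟩
    refine ⟨hξ, ext_inner_right ℂ fun g => ?_⟩
    rw [inner_Tmap hξ, (hzero g).2, map_zero, inner_zero_left]

namespace IsReproducingPair

variable {μ : Measure Y} {ψ φ θ : Y → E}

theorem exists_decomposition (hψ : IsReproducingPair μ ψ φ) (hθ : IsReproducingPair μ θ φ) :
    ∃ (A : E ≃L[ℂ] E) (θ₀ : Y → E), WeaklyMeasurable θ₀ ∧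
      (∀ f : E, MemV μ φ (Cpsi θ₀ f) ∧ Tmap μ φ (Cpsi θ₀ f) = 0) ∧
      ∀ᵐ x ∂μ, θ x = A (ψ x) + θ₀ x := by
  obtain ⟨hψm, hφm, hψint, S, hS⟩ := hψ
  obtain ⟨hθm, -, hθint, Sθ, hSθ⟩ := hθ
  set B := Sθ.trans S.symm
  refine ⟨B.adjoint, fun x => θ x - B.adjoint (ψ x), hθm.sub (hψm.map B.adjoint),
    fun f => ?_, Eventually.of_forall fun x => (add_sub_cancel _ _).symm⟩
  have hcoeff : Cpsi (fun x => θ x - B.adjoint (ψ x)) f = fun x => ⟪θ x, f⟫ - ⟪ψ x, B f⟫ :=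
    funext fun x => by rw [Cpsi, inner_sub_left, B.adjoint_inner_left]
  rw [memV_and_Tmap_eq_zero_iff, hcoeff]
  refine ⟨(hθm f).sub (hψm (B f)), fun g => ?_⟩
  simp only [sub_mul]
  refine ⟨(hθint f g).sub (hψint (B f) g), ?_⟩
  rw [integral_sub (hθint f g) (hψint (B f) g), ← hSθ, ← hS]
  simp [B]

theorem of_ae_eq_map_add (hψ : IsReproducingPair μ ψ φ) (hθ : WeaklyMeasurable θ)
    {A : E ≃L[ℂ] E} {θ₀ : Y → E}
    (hθ₀ : ∀ f : E, MemV μ φ (Cpsi θ₀ f) ∧ Tmap μ φ (Cpsi θ₀ f) = 0)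
    (hae : ∀ᵐ x ∂μ, θ x = A (ψ x) + θ₀ x) :
    IsReproducingPair μ θ φ := by
  obtain ⟨-, hφm, hψint, S, hS⟩ := hψ
  have hker := fun f => (memV_and_Tmap_eq_zero_iff.1 (hθ₀ f)).2
  have hcoeff : ∀ f g : E, (fun x => ⟪θ x, f⟫ * ⟪g, φ x⟫) =ᵐ[μ]
      fun x => ⟪ψ x, A.adjoint f⟫ * ⟪g, φ x⟫ + Cpsi θ₀ f x * ⟪g, φ x⟫ := fun f g => by
    filter_upwards [hae] with x hx
    rw [hx, inner_add_left, ← A.adjoint_inner_right, add_mul, Cpsi]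
  have hθint : ∀ f g : E, Integrable (fun x => ⟪θ x, f⟫ * ⟪g, φ x⟫) μ := fun f g =>
    ((hψint _ g).add (hker f g).1).congr (hcoeff f g).symm
  refine ⟨hθ, hφm, hθint, A.adjoint.trans S, fun f g => ?_⟩
  rw [integral_congr_ae (hcoeff f g), integral_add (hψint _ g) (hker f g).1, (hker f g).2,
    add_zero, ← hS]
  rfl

end IsReproducingPair

end ReproducingPair

theorem statement17_general (μ : Measure X) (ψ φ θ : X → H)
    (h : IsReproducingPair μ ψ φ) (hθ : WeaklyMeasurable θ) :
    IsReproducingPair μ θ φ ↔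
      ∃ (A : H ≃L[ℂ] H) (θ₀ : X → H), WeaklyMeasurable θ₀ ∧
        (∀ f : H, MemV μ φ (Cpsi θ₀ f) ∧ Tmap μ φ (Cpsi θ₀ f) = 0) ∧
        ∀ᵐ x ∂μ, θ x = A (ψ x) + θ₀ x :=
  ⟨h.exists_decomposition, fun ⟨_, _, _, hθ₀, hae⟩ => h.of_ae_eq_map_add hθ hθ₀ hae⟩

/-- Let `(ψ,φ)` be a reproducing pair and `θ` weakly measurable. Then
`(θ,φ)` is a reproducing pair iff `θ = Aψ + θ₀` (a.e.) with `A ∈ GL(H)` and `θ₀` weakly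
measurable satisfying `[⟨f,θ₀(·)⟩]_φ = [0]_φ` (i.e. `Ĉ_{θ₀,φ}f = 0`) for every `f ∈ H`. -/
theorem statement17 (μ : Measure X) [μ.Regular] (ψ φ θ : X → H)
    (h : IsReproducingPair μ ψ φ) (hθ : WeaklyMeasurable θ) :
    IsReproducingPair μ θ φ ↔
      ∃ (A : H ≃L[ℂ] H) (θ₀ : X → H), WeaklyMeasurable θ₀ ∧
        (∀ f : H, MemV μ φ (Cpsi θ₀ f) ∧ Tmap μ φ (Cpsi θ₀ f) = 0) ∧
        ∀ᵐ x ∂μ, θ x = A (ψ x) + θ₀ x :=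
  statement17_general μ ψ φ θ h hθ
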